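/- For any real numbers x, ν, ν' with ν, ν' ≠ 0, and any rational r/s in lowest terms not an integer multiple of 1/2, the average over k from 0 to s-1 of the squared Hilbert–Schmidt norm of D(ν) · R_{x+kr/s} · D(ν') equals (1/2)(ν² + ν⁻²)(ν'² + ν'⁻²), where D(ν) = diag(ν, ν⁻¹) and R_θ is the rotation matrix by angle 2πθ. -/

import Mathlib

/-!
Expanding the entries,
`‖D(ν) R_θ D(ν')‖²_HS = ½ (ν² + ν⁻²)(ν'² + ν'⁻²) + ½ (ν² - ν⁻²)(ν'² - ν'⁻²) cos 4πθ`.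
Along `θ = x + kr/s` the angles `4πθ` step by `2π · 2r/s`, so the cosines are real parts of a
geometric progression whose ratio is an `s`-th root of unity, different from `1` exactly because
`s ∤ 2r`; hence they sum to zero.
-/

noncomputable def Rot (θ : ℝ) : Matrix (Fin 2) (Fin 2) ℝ :=
  !![Real.cos (2 * Real.pi * θ), -Real.sin (2 * Real.pi * θ);
     Real.sin (2 * Real.pi * θ),  Real.cos (2 * Real.pi * θ)]

noncomputable def Dmat (ν : ℝ) : Matrix (Fin 2) (Fin 2) ℝ := !![ν, 0; 0, ν⁻¹]

/-- Squared Hilbert–Schmidt norm. -/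
def hsNormSq (A : Matrix (Fin 2) (Fin 2) ℝ) : ℝ :=
  (A 0 0) ^ 2 + (A 0 1) ^ 2 + (A 1 0) ^ 2 + (A 1 1) ^ 2

open Finset Complex

theorem IsPrimitiveRoot.sum_range_zpow_pow_eq_zero {K : Type*} [Field K] {ω : K} {s : ℕ}
    (hω : IsPrimitiveRoot ω s) {m : ℤ} (hm : ¬ (s : ℤ) ∣ m) :
    ∑ k ∈ range s, (ω ^ m) ^ k = 0 := by
  have hne : ω ^ m ≠ 1 := fun h => hm (hω.zpow_eq_one_iff_dvd m |>.mp h)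
  have hpow : (ω ^ m) ^ s = 1 := by
    rw [← zpow_natCast, ← zpow_mul, mul_comm, zpow_mul, zpow_natCast, hω.pow_eq_one, one_zpow]
  rw [geom_sum_eq hne, hpow, sub_self, zero_div]

theorem Real.sum_range_cos_add_eq_zero (a : ℝ) {m : ℤ} {s : ℕ} (hm : ¬ (s : ℤ) ∣ m) :
    ∑ k ∈ range s, Real.cos (a + 2 * Real.pi * m * k / s) = 0 := by
  rcases Nat.eq_zero_or_pos s with rfl | hs
  · simp
  have hω := Complex.isPrimitiveRoot_exp s hs.ne'
  have hterm : ∀ k : ℕ, Real.cos (a + 2 * Real.pi * m * k / s)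
      = (cexp (a * I) * (cexp (2 * Real.pi * I / s) ^ m) ^ k).re := by
    intro k
    rw [← Complex.exp_int_mul, ← Complex.exp_nat_mul, ← Complex.exp_add,
      ← exp_ofReal_mul_I_re]
    congr 2
    push_cast
    ring
  rw [sum_congr rfl fun k _ => hterm k, ← re_sum, ← mul_sum, hω.sum_range_zpow_pow_eq_zero hm,
    mul_zero, zero_re]

theorem hsNormSq_Dmat_mul_Rot_mul_Dmat (ν ν' θ : ℝ) :
    hsNormSq (Dmat ν * Rot θ * Dmat ν')
      = (1 / 2) * (ν ^ 2 + ν⁻¹ ^ 2) * (ν' ^ 2 + ν'⁻¹ ^ 2)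
        + (1 / 2) * (ν ^ 2 - ν⁻¹ ^ 2) * (ν' ^ 2 - ν'⁻¹ ^ 2) * Real.cos (4 * Real.pi * θ) := by
  have hcos : Real.cos (4 * Real.pi * θ) = 2 * Real.cos (2 * Real.pi * θ) ^ 2 - 1 := by
    rw [← Real.cos_two_mul]; ring_nf
  simp only [hsNormSq, Dmat, Rot, Matrix.mul_fin_two, mul_zero, zero_mul, add_zero, zero_add,
    Matrix.of_apply, Matrix.cons_val', Matrix.cons_val_zero, Matrix.cons_val_one,
    Matrix.empty_val', Matrix.cons_val_fin_one]
  rw [hcos]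
  linear_combination (ν ^ 2 * ν'⁻¹ ^ 2 + ν⁻¹ ^ 2 * ν' ^ 2) * Real.sin_sq_add_cos_sq (2 * Real.pi * θ)

theorem stmt2_general (x ν ν' : ℝ) (r : ℤ) (s : ℕ) (hs : 0 < s)
    (hhalf : ¬ ((s : ℤ) ∣ 2 * r)) :
    (1 / (s : ℝ)) * ∑ k ∈ Finset.range s,
        hsNormSq (Dmat ν * Rot (x + (k : ℝ) * (r : ℝ) / (s : ℝ)) * Dmat ν')
      = (1 / 2) * (ν ^ 2 + ν⁻¹ ^ 2) * (ν' ^ 2 + ν'⁻¹ ^ 2) := by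
  have hcos : ∑ k ∈ range s, Real.cos (4 * Real.pi * (x + k * r / s)) = 0 := by
    rw [← Real.sum_range_cos_add_eq_zero (4 * Real.pi * x) hhalf]
    refine sum_congr rfl fun k _ => congrArg Real.cos ?_
    push_cast
    ring
  have hs0 : (s : ℝ) ≠ 0 := by positivity
  simp only [hsNormSq_Dmat_mul_Rot_mul_Dmat, sum_add_distrib, sum_const, card_range,
    nsmul_eq_mul, ← mul_sum, hcos, mul_zero, add_zero]
  field_simp

theorem stmt2 (x ν ν' : ℝ) (hν : ν ≠ 0) (hν' : ν' ≠ 0) (r : ℤ) (s : ℕ) (hs : 0 < s)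
    (hcop : Int.gcd r (s : ℤ) = 1) (hhalf : ¬ ((s : ℤ) ∣ 2 * r)) :
    (1 / (s : ℝ)) * ∑ k ∈ Finset.range s,
        hsNormSq (Dmat ν * Rot (x + (k : ℝ) * (r : ℝ) / (s : ℝ)) * Dmat ν')
      = (1 / 2) * (ν ^ 2 + ν⁻¹ ^ 2) * (ν' ^ 2 + ν'⁻¹ ^ 2) :=
  stmt2_general x ν ν' r s hs hhalf
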